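/- arXiv:1703.07299 — 10 statements merged into one kernel-verified Lean document; each statement's English description precedes it below -/
import Mathlib

section
/- Let q = 2^n, let α, α' be distinct elements of F_q*, and let f ∈ F_q[x]. If m is odd then deg D²_{α,α'} f ≤ m−3, and if m is even then deg D²_{α,α'} f ≤ m−4, where m = deg f and D²_{α,α'}f(x) = f(x) + f(x+α) + f(x+α') + f(x+α+α'). -/
open Polynomial

/-- The second order derivative `D²_{α,α'} f`. -/
noncomputable def secondDeriv {F : Type*} [Field F] (f : Polynomial F) (a b : F) :
    Polynomial F :=
  f + f.comp (X + C a) + f.comp (X + C b) + f.comp (X + C (a + b))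

lemma choose_three_even {m : ℕ} (hm : Even m) (h3 : 3 ≤ m) : 2 ∣ m.choose 3 := by
  have h1 : 1 ≤ m := by omega
  have key : m * (m - 1).choose 2 = m.choose 3 * 3 := by
    have := Nat.add_one_mul_choose_eq (m - 1) 2
    have hs : m - 1 + 1 = m := by omega
    simpa [hs] using this
  have h2 : 2 ∣ m.choose 3 * 3 := by
    rw [← key]
    exact Dvd.dvd.mul_right hm.two_dvd _
  rcases (Nat.Prime.dvd_mul Nat.prime_two).mp h2 with h | h
  · exact h
  · omega

lemma coeff_secondDeriv_zero {F : Type*} [Field F] (h2 : (2 : F) = 0)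
    (a b : F) (f : Polynomial F) (m : ℕ) (hdeg : f.natDegree = m) (k : ℕ)
    (hk : m ≤ k + 2 ∨ (m = k + 3 ∧ Even m)) :
    (secondDeriv f a b).coeff k = 0 := by
  set g := Polynomial.hasseDeriv k f with hg
  have hcoeff : ∀ c : F, (f.comp (X + C c)).coeff k = g.eval c := by
    intro c
    rw [← taylor_apply, taylor_coeff]
  have hf : f.coeff k = g.eval 0 := by
    have := hcoeff 0
    simpa using this
  have hgdeg : g.natDegree ≤ m - k := by
    rw [hg, ← hdeg]; exact Polynomial.natDegree_hasseDeriv_le f k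
  have hstep : (secondDeriv f a b).coeff k
      = g.eval 0 + g.eval a + g.eval b + g.eval (a + b) := by
    simp only [secondDeriv, coeff_add, hcoeff, hf]
  rw [hstep]
  have hev : ∀ c : F, g.eval c = ∑ j ∈ Finset.range (g.natDegree + 1), g.coeff j * c ^ j := by
    intro c; exact Polynomial.eval_eq_sum_range _
  rw [hev 0, hev a, hev b, hev (a + b), ← Finset.sum_add_distrib,
    ← Finset.sum_add_distrib, ← Finset.sum_add_distrib]
  apply Finset.sum_eq_zero
  intro j hj
  have hjle : j ≤ g.natDegree := Nat.lt_succ_iff.mp (Finset.mem_range.mp hj)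
  have hj3 : j ≤ 3 := by
    rcases hk with h | ⟨h, _⟩ <;> omega
  interval_cases j
  · simp only [pow_zero, mul_one]
    linear_combination 2 * g.coeff 0 * h2
  · simp only [pow_one]
    linear_combination (g.coeff 1 * (a + b)) * h2
  · linear_combination (g.coeff 2 * (a ^ 2 + a * b + b ^ 2)) * h2
  · -- j = 3 : here m = k + 3 and m is even, so the binomial coefficient vanishes
    rcases hk with h | ⟨h, heven⟩
    · omega
    have hc3 : g.coeff 3 = 0 := by
      rw [hg, Polynomial.hasseDeriv_coeff]
      have hsym : (3 + k).choose k = (3 + k).choose 3 := by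
        have := Nat.choose_symm (show k ≤ 3 + k by omega)
        simpa [show 3 + k - k = 3 by omega] using this.symm
      rw [hsym, show 3 + k = m by omega]
      obtain ⟨t, ht⟩ := choose_three_even heven (by omega)
      rw [ht]
      push_cast
      rw [h2]
      ring
    rw [hc3]
    ring

/-- For `f ∈ 𝔽_q[x]` of degree `m` and distinct `α, α' ∈ 𝔽_q*`, the second order
derivative has degree at most `m - 3` if `m` is odd, and at most `m - 4` if `m` is even. -/
theorem stmt3 (n : ℕ) (F : Type*) [Field F] [Fintype F] (hF : Fintype.card F = 2 ^ n)
    (α α' : F) (hα : α ≠ 0) (hα' : α' ≠ 0) (hne : α ≠ α')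
    (f : Polynomial F) (m : ℕ) (hdeg : f.natDegree = m) :
    (Odd m → (secondDeriv f α α').degree ≤ ((m - 3 : ℕ) : WithBot ℕ)) ∧
    (Even m → (secondDeriv f α α').degree ≤ ((m - 4 : ℕ) : WithBot ℕ)) := by
  have h2 : (2 : F) = 0 := by
    have hn : n ≠ 0 := by
      intro h
      have := Fintype.one_lt_card (α := F)
      rw [hF, h] at this
      omega
    have hcast : ((Fintype.card F : ℕ) : F) = 0 := Nat.cast_card_eq_zero F
    rw [hF] at hcast
    push_cast at hcast
    exact pow_eq_zero_iff hn |>.mp hcast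
  constructor
  · intro _
    rw [Polynomial.degree_le_iff_coeff_zero]
    intro k hk
    have hk' : (m - 3 : ℕ) < k := by exact_mod_cast hk
    exact coeff_secondDeriv_zero h2 α α' f m hdeg k (Or.inl (by omega))
  · intro heven
    rw [Polynomial.degree_le_iff_coeff_zero]
    intro k hk
    have hk' : (m - 4 : ℕ) < k := by exact_mod_cast hk
    refine coeff_secondDeriv_zero h2 α α' f m hdeg k ?_
    by_cases hm : m = k + 3
    · exact Or.inr ⟨hm, heven⟩
    · exact Or.inl (by omega)
end

section
/- Let q = 2^n, α ∈ F_q*, and m a nonnegative integer. A polynomial f ∈ F_q[x] of degree ≤ m satisfies D_α f = 0 (i.e. f(x) = f(x+α) identically) if and only if there exists h ∈ F_q[x] with deg h ≤ ⌊m/2⌋ such that f(x) = h(x(x+α)). -/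
/-!
If `f(x + α) = f(x)` then `f` takes the same value `c = f(0)` at `0` and at `-α`, so
`f = c + x(x + α) q`. In characteristic two `x(x + α)` is itself invariant under `x ↦ x + α`,
hence so is `q`, whose degree is smaller by two; induction on the degree writes `f` as a
polynomial in `x(x + α)`. Conversely every such polynomial is invariant.
-/

open Polynomial

namespace Polynomial

section CharTwo

variable {R : Type*} [CommRing R] [CharP R 2]

lemma X_mul_X_add_C_comp_X_add_C (α : R) :
    (X * (X + C α)).comp (X + C α) = X * (X + C α) := by
  simp only [mul_comp, X_comp, add_comp, C_comp, add_assoc, CharTwo.add_self_eq_zero, add_zero,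
    mul_comm]

lemma comp_X_mul_X_add_C_comp_X_add_C (h : R[X]) (α : R) :
    (h.comp (X * (X + C α))).comp (X + C α) = h.comp (X * (X + C α)) := by
  rw [comp_assoc, X_mul_X_add_C_comp_X_add_C]

end CharTwo

variable {F : Type*} [Field F] {α : F}

lemma eval_add_of_comp_X_add_C_eq {f : F[X]} (hf : f.comp (X + C α) = f) (x : F) :
    f.eval (x + α) = f.eval x := by
  simpa using congrArg (eval x) hf

lemma exists_eq_C_add_X_mul_X_add_C_mul_of_comp_X_add_C_eq (hα : α ≠ 0) {f : F[X]}
    (hf : f.comp (X + C α) = f) : ∃ q : F[X], f = C (f.eval 0) + X * (X + C α) * q := by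
  obtain ⟨g, hg⟩ : X ∣ f - C (f.eval 0) := by
    simpa using X_sub_C_dvd_sub_C_eval (p := f) (a := 0)
  have hroot : g.IsRoot (-α) := by
    have hval := congrArg (eval (-α)) hg
    rw [eval_sub, eval_C, ← eval_add_of_comp_X_add_C_eq hf, neg_add_cancel, sub_self,
      eval_mul, eval_X] at hval
    exact (mul_eq_zero.mp hval.symm).resolve_left (neg_ne_zero.mpr hα)
  obtain ⟨q, rfl⟩ := dvd_iff_isRoot.mpr hroot
  refine ⟨q, ?_⟩
  rw [map_neg, sub_neg_eq_add, ← mul_assoc] at hg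
  rw [← hg, add_sub_cancel]

variable [CharP F 2]

theorem exists_natDegree_le_comp_X_mul_X_add_C_of_comp_X_add_C_eq (hα : α ≠ 0) (m : ℕ) :
    ∀ f : F[X], f.natDegree ≤ m → f.comp (X + C α) = f →
      ∃ h : F[X], h.natDegree ≤ m / 2 ∧ f = h.comp (X * (X + C α)) := by
  induction m using Nat.strong_induction_on with
  | _ m ih =>
  intro f hfm hf
  obtain ⟨q, hfq⟩ := exists_eq_C_add_X_mul_X_add_C_mul_of_comp_X_add_C_eq hα hf
  set c := f.eval 0
  have hg0 : X * (X + C α) ≠ 0 := mul_ne_zero X_ne_zero (X_add_C_ne_zero α)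
  have hq : q.comp (X + C α) = q := by
    have hfq' := hfq ▸ hf
    rw [add_comp, C_comp, mul_comp, X_mul_X_add_C_comp_X_add_C] at hfq'
    exact mul_left_cancel₀ hg0 (add_left_cancel hfq')
  rcases eq_or_ne q 0 with rfl | hq0
  · exact ⟨C c, by simp, by simp [hfq]⟩
  have hqm : q.natDegree + 2 ≤ m := by
    rw [hfq, natDegree_C_add, natDegree_mul hg0 hq0, natDegree_mul X_ne_zero (X_add_C_ne_zero α),
      natDegree_X, natDegree_X_add_C] at hfm
    omega
  obtain ⟨h, hh, rfl⟩ := ih (m - 2) (by omega) q (by omega) hq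
  refine ⟨C c + X * h, ?_, ?_⟩
  · calc (C c + X * h).natDegree ≤ 1 + h.natDegree := by
          rw [natDegree_C_add, ← natDegree_X (R := F)]; exact natDegree_mul_le
      _ ≤ m / 2 := by omega
  · rw [hfq, add_comp, C_comp, mul_comp, X_comp]

theorem comp_X_add_C_eq_self_iff (hα : α ≠ 0) {m : ℕ} {f : F[X]} (hf : f.natDegree ≤ m) :
    f.comp (X + C α) = f ↔ ∃ h : F[X], h.natDegree ≤ m / 2 ∧ f = h.comp (X * (X + C α)) := by
  refine ⟨exists_natDegree_le_comp_X_mul_X_add_C_of_comp_X_add_C_eq hα m f hf, ?_⟩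
  rintro ⟨h, -, rfl⟩
  exact comp_X_mul_X_add_C_comp_X_add_C h α

end Polynomial

/-- Kernel of `D_α` on `𝔽_q[x]_m`: a polynomial `f` of degree at most `m` satisfies
`f(x) = f(x+α)` identically iff `f(x) = h(x(x+α))` for some `h` of degree at most `⌊m/2⌋`. -/
theorem stmt6 (n : ℕ) (F : Type*) [Field F] [Fintype F] (hF : Fintype.card F = 2 ^ n)
    (α : F) (hα : α ≠ 0) (m : ℕ) (f : Polynomial F) (hf : f.natDegree ≤ m) :
    f.comp (X + C α) = f ↔
      ∃ h : Polynomial F, h.natDegree ≤ m / 2 ∧ f = h.comp (X * (X + C α)) := by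
  have : CharP F 2 := charP_of_card_eq_prime_pow hF
  exact comp_X_add_C_eq_self_iff hα hf
end

section
/- Let q = 2^n with n ≥ 3, and let α, α' ∈ F_q* be distinct with m ≥ 7 satisfying m ≡ 0, 1, 2 or 7 (mod 8), and let d = (m−4)/4, (m−5)/4, (m−6)/4, (m−3)/4 respectively. Then the linear map L_{α,α'}, sending f ∈ F_q[x]_m to the unique g of degree ≤ d with D²_{α,α'}f(x) = g(x(x+α)(x+α')(x+α+α')), maps F_q[x]_m surjectively onto F_q[x]_d. -/
open Polynomial

lemma cube_sum_key {R : Type*} [CommRing R] (h2 : (2 : R) = 0) (a b : R) :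
    (X : R[X])^3 + (X + C a)^3 + (X + C b)^3 + (X + C (a + b))^3 = C (a^2*b + a*b^2) := by
  have h2' : (2 : R[X]) = 0 := by
    rw [← map_ofNat (C : R →+* R[X]) 2, h2, map_zero]
  simp only [C_add, C_mul, C_pow]
  linear_combination (2*(X:R[X])^3 + 3*(C a + C b)*X^2 + 3*(C a^2 + C a*C b + C b^2)*X
    + C a^3 + C b^3 + C a^2*C b + C a*C b^2) * h2'

/-- Surjectivity of `L_{α,α'} : 𝔽_q[x]_m → 𝔽_q[x]_d`: for every `g` of degree at most `d`
there is `f` of degree at most `m` with `D²_{α,α'} f(x) = g(x(x+α)(x+α')(x+α+α'))`. -/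
theorem stmt9 (n : ℕ) (hn : 3 ≤ n) (F : Type*) [Field F] [Fintype F]
    (hF : Fintype.card F = 2 ^ n)
    (m d : ℕ) (hm : 7 ≤ m)
    (hd : (m % 8 = 0 ∧ d = (m - 4) / 4) ∨ (m % 8 = 1 ∧ d = (m - 5) / 4) ∨
          (m % 8 = 2 ∧ d = (m - 6) / 4) ∨ (m % 8 = 7 ∧ d = (m - 3) / 4))
    (α α' : F) (hα : α ≠ 0) (hα' : α' ≠ 0) (hne : α ≠ α') :
    ∀ g : Polynomial F, g.natDegree ≤ d →
      ∃ f : Polynomial F, f.natDegree ≤ m ∧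
        secondDeriv f α α' = g.comp (X * (X + C α) * (X + C α') * (X + C (α + α'))) := by
  -- characteristic 2
  have h2 : (2 : F) = 0 := by
    have hc := FiniteField.cast_card_eq_zero F
    rw [hF] at hc
    push_cast at hc
    exact pow_eq_zero_iff (by omega) |>.mp hc
  have hxx : ∀ x : F, x + x = 0 := fun x => by
    rw [← two_mul, h2, zero_mul]
  intro g hg
  set P : Polynomial F := X * (X + C α) * (X + C α') * (X + C (α + α')) with hPdef
  -- invariance of P under translations
  have hadd : ∀ v : F, P.comp (X + C v) =
      (X + C v) * (X + C (v + α)) * (X + C (v + α')) * (X + C (v + (α + α'))) := by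
    intro v
    simp only [hPdef, mul_comp, add_comp, X_comp, C_comp]
    rw [add_assoc, add_assoc, add_assoc, ← C_add, ← C_add, ← C_add]
  have hPα : P.comp (X + C α) = P := by
    rw [hadd α]
    have e1 : α + α = 0 := hxx α
    have e2 : α + (α + α') = α' := by rw [← add_assoc, e1, zero_add]
    have e3 : α + α' = α + α' := rfl
    rw [e1, e2, C_0, add_zero]
    ring
  have hPα' : P.comp (X + C α') = P := by
    rw [hadd α']
    have e1 : α' + α' = 0 := hxx α'
    have e2 : α' + (α + α') = α := by
      rw [add_comm α α', ← add_assoc, e1, zero_add]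
    have e3 : α' + α = α + α' := add_comm _ _
    rw [e1, e2, e3, C_0, add_zero]
    ring
  have hPαα' : P.comp (X + C (α + α')) = P := by
    rw [hadd (α + α')]
    have e1 : (α + α') + (α + α') = 0 := hxx _
    have e2 : (α + α') + α = α' := by
      rw [add_comm α α', add_assoc, hxx α, add_zero]
    have e3 : (α + α') + α' = α := by rw [add_assoc, hxx α', add_zero]
    rw [e1, e2, e3, C_0, add_zero]
    ring
  -- the constant c
  set c : F := α^2*α' + α*α'^2 with hcdef
  have hαα' : α + α' ≠ 0 := by
    intro h
    apply hne
    have : α + α' + α' = α' := by rw [h, zero_add]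
    rwa [add_assoc, hxx α', add_zero] at this
  have hc : c ≠ 0 := by
    have : c = α * α' * (α + α') := by ring
    rw [this]
    exact mul_ne_zero (mul_ne_zero hα hα') hαα'
  refine ⟨C c⁻¹ * X^3 * g.comp P, ?_, ?_⟩
  · -- degree bound
    have h1 : (C c⁻¹ * X^3 * g.comp P).natDegree ≤
        (C c⁻¹ * X^3).natDegree + (g.comp P).natDegree := natDegree_mul_le
    have h2' : (C c⁻¹ * X^3).natDegree ≤ 3 := by
      refine le_trans natDegree_mul_le ?_
      simp [natDegree_C, natDegree_X_pow]
    have t1 : ((X : Polynomial F) * (X + C α)).natDegree ≤ 2 := by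
      refine le_trans natDegree_mul_le ?_
      rw [natDegree_X, natDegree_X_add_C]
    have t2 : ((X : Polynomial F) * (X + C α) * (X + C α')).natDegree ≤ 3 := by
      refine le_trans natDegree_mul_le ?_
      rw [natDegree_X_add_C]
      omega
    have hP4 : P.natDegree ≤ 4 := by
      rw [hPdef]
      refine le_trans natDegree_mul_le ?_
      rw [natDegree_X_add_C]
      omega
    have h3 : (g.comp P).natDegree ≤ d * 4 :=
      le_trans natDegree_comp_le (Nat.mul_le_mul hg hP4)
    have : (C c⁻¹ * X^3 * g.comp P).natDegree ≤ 3 + d * 4 :=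
      le_trans h1 (add_le_add h2' h3)
    refine le_trans this ?_
    omega
  · -- the identity
    have key := cube_sum_key h2 α α'
    have comp3 : ∀ v : F, (C c⁻¹ * X^3 * g.comp P).comp (X + C v) =
        C c⁻¹ * (X + C v)^3 * (g.comp (P.comp (X + C v))) := by
      intro v
      simp [mul_comp, pow_comp, comp_assoc]
    rw [secondDeriv]
    rw [comp3 α, comp3 α', comp3 (α + α'), hPα, hPα', hPαα']
    have factored : C c⁻¹ * X ^ 3 * g.comp P + C c⁻¹ * (X + C α) ^ 3 * g.comp P +
        C c⁻¹ * (X + C α') ^ 3 * g.comp P + C c⁻¹ * (X + C (α + α')) ^ 3 * g.comp P =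
        C c⁻¹ * (X^3 + (X + C α)^3 + (X + C α')^3 + (X + C (α + α'))^3) * g.comp P := by
      ring
    rw [factored, key, ← hcdef, ← C_mul, inv_mul_cancel₀ hc, C_1, one_mul]
end

section
/- Let k be a field of characteristic 2, and let k(y₁), k(y₂) be two Artin–Schreier extensions of k with y_i² + γ_i y_i = w_i for γ_i, w_i ∈ k* (i = 1,2), where each y_i ∉ k. Then k(y₁) = k(y₂) if and only if γ₂ y₁ + γ₁ y₂ ∈ k. -/
/-!
Since `y₁` is quadratic over `k`, every element of `k(y₁)` has the form `b y₁ + a` with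
`a, b ∈ k`. If `y₂ = b y₁ + a`, substituting into `y₂² + γ₂ y₂ = w₂` and using
`y₁² = γ₁ y₁ + w₁` (characteristic 2) shows that `b (b γ₁ + γ₂) y₁ ∈ k`; as `y₁ ∉ k` and
`b ≠ 0` (because `y₂ ∉ k`), this forces `b γ₁ = γ₂`, whence `γ₂ y₁ + γ₁ y₂ = γ₁ a ∈ k`.
Conversely, `γ₂ y₁ + γ₁ y₂ ∈ k` with `γ₁, γ₂ ≠ 0` expresses each `yᵢ` linearly over `k` in the
other one.
-/

open Polynomial
open scoped IntermediateField

section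

variable {k K : Type*} [Field k] [Field K] [Algebra k K]

theorem exists_eq_algebraMap_mul_add_of_mem_adjoin_simple {y z : K} {γ w : k}
    (hy : y ^ 2 + algebraMap k K γ * y = algebraMap k K w) (hz : z ∈ k⟮y⟯) :
    ∃ a b : k, z = algebraMap k K b * y + algebraMap k K a := by
  set q : k[X] := X ^ 2 + C γ * X - C w
  have hq : q.Monic := by unfold q; monicity!
  have hqy : aeval y q = 0 := by simp [q, hy]
  have hqdeg : q.natDegree = 2 := by unfold q; compute_degree!
  rw [← IntermediateField.mem_toSubalgebra,
    IntermediateField.adjoin_simple_toSubalgebra_of_isAlgebraic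
      (IsIntegral.isAlgebraic ⟨q, hq, by rwa [← aeval_def]⟩),
    Algebra.adjoin_singleton_eq_range_aeval] at hz
  obtain ⟨p, rfl⟩ := hz
  have hr : (p %ₘ q).natDegree ≤ 1 := by
    have := natDegree_modByMonic_lt p hq (by rintro h; simp [h] at hqdeg)
    omega
  obtain ⟨b, a, hba⟩ := exists_eq_X_add_C_of_natDegree_le_one hr
  refine ⟨a, b, ?_⟩
  rw [AlgHom.toRingHom_eq_coe, RingHom.coe_coe, ← aeval_modByMonic_eq_self_of_root hqy, hba]
  simp

theorem eq_zero_of_algebraMap_mul_mem_range {y : K} {c : k}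
    (hy : y ∉ Set.range (algebraMap k K))
    (hc : algebraMap k K c * y ∈ Set.range (algebraMap k K)) : c = 0 := by
  by_contra hc0
  obtain ⟨d, hd⟩ := hc
  exact hy ⟨d / c, by rw [map_div₀, hd, mul_div_cancel_left₀ _ (by simpa using hc0)]⟩

theorem mem_adjoin_simple_of_algebraMap_mul_add_mem_range {y₁ y₂ : K} {γ₁ γ₂ : k}
    (hγ₂ : γ₂ ≠ 0)
    (h : algebraMap k K γ₁ * y₁ + algebraMap k K γ₂ * y₂ ∈ Set.range (algebraMap k K)) :
    y₂ ∈ k⟮y₁⟯ := by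
  obtain ⟨c, hc⟩ := h
  have hy₂ : y₂ = algebraMap k K γ₂⁻¹ * (algebraMap k K c - algebraMap k K γ₁ * y₁) := by
    rw [hc, add_sub_cancel_left, map_inv₀, inv_mul_cancel_left₀ (by simpa using hγ₂)]
  rw [hy₂]
  exact mul_mem (algebraMap_mem _ _)
    (sub_mem (algebraMap_mem _ _)
      (mul_mem (algebraMap_mem _ _) (IntermediateField.mem_adjoin_simple_self k y₁)))

theorem algebraMap_mul_add_mem_range_of_mem_adjoin_simple [CharP k 2] {y₁ y₂ : K}
    {γ₁ γ₂ w₁ w₂ : k}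
    (h₁ : y₁ ^ 2 + algebraMap k K γ₁ * y₁ = algebraMap k K w₁)
    (h₂ : y₂ ^ 2 + algebraMap k K γ₂ * y₂ = algebraMap k K w₂)
    (hy₁ : y₁ ∉ Set.range (algebraMap k K)) (hy₂ : y₂ ∉ Set.range (algebraMap k K))
    (hmem : y₂ ∈ k⟮y₁⟯) :
    algebraMap k K γ₂ * y₁ + algebraMap k K γ₁ * y₂ ∈ Set.range (algebraMap k K) := by
  have : CharP K 2 := charP_of_injective_algebraMap (algebraMap k K).injective 2
  obtain ⟨a, b, rfl⟩ := exists_eq_algebraMap_mul_add_of_mem_adjoin_simple h₁ hmem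
  have hb : b ≠ 0 := by rintro rfl; exact hy₂ ⟨a, by simp⟩
  have hlin : algebraMap k K (b * (b * γ₁ + γ₂)) * y₁ ∈ Set.range (algebraMap k K) :=
    ⟨w₂ + b ^ 2 * w₁ + a ^ 2 + γ₂ * a, by
      simp only [map_add, map_mul, map_pow]
      linear_combination (-1 : K) * h₂ - algebraMap k K b ^ 2 * h₁ +
        (algebraMap k K a ^ 2 + algebraMap k K γ₂ * algebraMap k K a +
          (algebraMap k K b * y₁) ^ 2 + algebraMap k K b * algebraMap k K a * y₁) *
          CharTwo.two_eq_zero (R := K)⟩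
  have hbγ : b * γ₁ = γ₂ := by
    have := eq_zero_of_algebraMap_mul_mem_range hy₁ hlin
    rwa [mul_eq_zero, or_iff_right hb, CharTwo.add_eq_zero] at this
  refine ⟨γ₁ * a, ?_⟩
  rw [← hbγ]
  simp only [map_mul]
  linear_combination (-(algebraMap k K b * algebraMap k K γ₁ * y₁)) * CharTwo.two_eq_zero (R := K)

end

theorem stmt10_general (k K : Type*) [Field k] [Field K] [Algebra k K] [CharP k 2]
    (y₁ y₂ : K) (γ₁ γ₂ w₁ w₂ : k)
    (hγ₁ : γ₁ ≠ 0) (hγ₂ : γ₂ ≠ 0)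
    (h₁ : y₁ ^ 2 + algebraMap k K γ₁ * y₁ = algebraMap k K w₁)
    (h₂ : y₂ ^ 2 + algebraMap k K γ₂ * y₂ = algebraMap k K w₂)
    (hy₁ : y₁ ∉ Set.range (algebraMap k K)) (hy₂ : y₂ ∉ Set.range (algebraMap k K)) :
    IntermediateField.adjoin k {y₁} = IntermediateField.adjoin k {y₂} ↔
      algebraMap k K γ₂ * y₁ + algebraMap k K γ₁ * y₂ ∈ Set.range (algebraMap k K) := by
  refine ⟨fun heq ↦ ?_, fun h ↦ le_antisymm ?_ ?_⟩
  · exact algebraMap_mul_add_mem_range_of_mem_adjoin_simple h₁ h₂ hy₁ hy₂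
      (heq ▸ IntermediateField.mem_adjoin_simple_self k y₂)
  · rw [add_comm] at h
    exact IntermediateField.adjoin_simple_le_iff.mpr
      (mem_adjoin_simple_of_algebraMap_mul_add_mem_range hγ₂ h)
  · exact IntermediateField.adjoin_simple_le_iff.mpr
      (mem_adjoin_simple_of_algebraMap_mul_add_mem_range hγ₁ h)

/-- Two Artin–Schreier extensions `k(y₁)` and `k(y₂)` of a field `k` of characteristic 2,
with `yᵢ² + γᵢ yᵢ = wᵢ` (`γᵢ, wᵢ ∈ k*`, `yᵢ ∉ k`), coincide iff `γ₂y₁ + γ₁y₂ ∈ k`. -/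
theorem stmt10 (k K : Type*) [Field k] [Field K] [Algebra k K] [CharP k 2]
    (y₁ y₂ : K) (γ₁ γ₂ w₁ w₂ : k)
    (hγ₁ : γ₁ ≠ 0) (hγ₂ : γ₂ ≠ 0) (hw₁ : w₁ ≠ 0) (hw₂ : w₂ ≠ 0)
    (h₁ : y₁ ^ 2 + algebraMap k K γ₁ * y₁ = algebraMap k K w₁)
    (h₂ : y₂ ^ 2 + algebraMap k K γ₂ * y₂ = algebraMap k K w₂)
    (hy₁ : y₁ ∉ Set.range (algebraMap k K)) (hy₂ : y₂ ∉ Set.range (algebraMap k K)) :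
    IntermediateField.adjoin k {y₁} = IntermediateField.adjoin k {y₂} ↔
      algebraMap k K γ₂ * y₁ + algebraMap k K γ₁ * y₂ ∈ Set.range (algebraMap k K) :=
  stmt10_general k K y₁ y₂ γ₁ γ₂ w₁ w₂ hγ₁ hγ₂ h₁ h₂ hy₁ hy₂
end

section
/- Let q = 2^n, let α, α' ∈ F_q* be distinct, and set γ = α'² + αα'. For every x ∈ F_q, the element z = x(x+α)(x+α')(x+α+α') satisfies Tr_{F_q/F_2}(z/γ²) = 0. -/
/-!
In characteristic 2, with `u = x(x+α)` and `γ = α'² + αα'`, one has `z = u(u+γ)`, so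
`z/γ² = w² + w` for `w = u/γ` (also when `γ = 0`, where both sides are `0` since `x / 0 = 0`).
The trace is invariant under Frobenius, hence `Tr(w² + w) = Tr(w) + Tr(w) = 0`.
-/

theorem Algebra.trace_pow_card {K L : Type*} [Field K] [Fintype K] [Field L] [Algebra K L]
    [Algebra.IsAlgebraic K L] (x : L) :
    Algebra.trace K L (x ^ Fintype.card K) = Algebra.trace K L x :=
  Algebra.trace_eq_of_algEquiv (FiniteField.frobeniusAlgEquivOfAlgebraic K L) x

theorem Algebra.trace_pow_card_sub_self {K L : Type*} [Field K] [Fintype K] [Field L]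
    [Algebra K L] [Algebra.IsAlgebraic K L] (x : L) :
    Algebra.trace K L (x ^ Fintype.card K - x) = 0 := by
  rw [map_sub, Algebra.trace_pow_card, sub_self]

theorem ZMod.trace_sq_add_self_eq_zero {F : Type*} [Field F] [Algebra (ZMod 2) F]
    [Algebra.IsAlgebraic (ZMod 2) F] (w : F) :
    Algebra.trace (ZMod 2) F (w ^ 2 + w) = 0 := by
  have : CharP F 2 := charP_of_injective_algebraMap' (ZMod 2) 2
  simpa [CharTwo.sub_eq_add] using Algebra.trace_pow_card_sub_self (K := ZMod 2) w

theorem CharTwo.mul_add_mul_add_mul_add_add_eq {R : Type*} [CommRing R] [CharP R 2]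
    (x a b : R) :
    x * (x + a) * (x + b) * (x + a + b) =
      (x * (x + a)) ^ 2 + (b ^ 2 + a * b) * (x * (x + a)) := by
  linear_combination (b * x ^ 3 + a * b * x ^ 2) * CharTwo.two_eq_zero (R := R)

theorem sq_add_mul_div_sq {F : Type*} [Field F] (u g : F) :
    (u ^ 2 + g * u) / g ^ 2 = (u / g) ^ 2 + u / g := by
  rcases eq_or_ne g 0 with rfl | hg
  · simp
  · field_simp

theorem stmt11_general (F : Type*) [Field F] [Fintype F] [Algebra (ZMod 2) F]
    (α α' : F) :
    ∀ x : F,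
      Algebra.trace (ZMod 2) F
        (x * (x + α) * (x + α') * (x + α + α') / (α' ^ 2 + α * α') ^ 2) = 0 := by
  have : CharP F 2 := charP_of_injective_algebraMap' (ZMod 2) 2
  intro x
  rw [CharTwo.mul_add_mul_add_mul_add_add_eq, sq_add_mul_div_sq]
  exact ZMod.trace_sq_add_self_eq_zero _

/-- For distinct `α, α' ∈ 𝔽_q*` and `γ = α'² + αα'`, every value
`z = x(x+α)(x+α')(x+α+α')` satisfies `Tr_{𝔽_q/𝔽₂}(z/γ²) = 0`. -/
theorem stmt11 (n : ℕ) (F : Type*) [Field F] [Fintype F] [Algebra (ZMod 2) F]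
    (hF : Fintype.card F = 2 ^ n)
    (α α' : F) (hα : α ≠ 0) (hα' : α' ≠ 0) (hne : α ≠ α') :
    ∀ x : F,
      Algebra.trace (ZMod 2) F
        (x * (x + α) * (x + α') * (x + α + α') / (α' ^ 2 + α * α') ^ 2) = 0 :=
  stmt11_general F α α'
end

section
/- Let q = 2^n. The map Θ from {(α,α') ∈ F_q* × F_q* : α ≠ α'} to itself, defined by Θ(α,α') = (α² + αα', α'² + αα'), is well-defined (its values have distinct nonzero coordinates) and bijective. -/
/-- The map `Θ(α,α') = (α² + αα', α'² + αα')` is a well-defined bijection of the set of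
pairs of distinct nonzero elements of `𝔽_q` onto itself. -/
theorem stmt13 (n : ℕ) (F : Type*) [Field F] [Fintype F] (hF : Fintype.card F = 2 ^ n) :
    Set.BijOn (fun p : F × F => (p.1 ^ 2 + p.1 * p.2, p.2 ^ 2 + p.1 * p.2))
      {p : F × F | p.1 ≠ 0 ∧ p.2 ≠ 0 ∧ p.1 ≠ p.2}
      {p : F × F | p.1 ≠ 0 ∧ p.2 ≠ 0 ∧ p.1 ≠ p.2} := by
  -- char F = 2
  have hchar : (2 : F) = 0 := by
    obtain ⟨m, hp, hcard⟩ := FiniteField.card F (ringChar F)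
    have h2 : ringChar F = 2 := by
      have hdvd : ringChar F ∣ 2 ^ n := by
        rw [← hF, hcard]
        exact dvd_pow_self _ (by positivity)
      have := (Nat.Prime.dvd_of_dvd_pow hp hdvd)
      exact (Nat.prime_dvd_prime_iff_eq hp Nat.prime_two).mp this
    have := ringChar.spec F 2
    rw [h2] at this
    simpa using this.mpr dvd_rfl
  have htwo : ∀ x : F, x + x = 0 := by
    intro x
    have : (2 : F) * x = 0 := by rw [hchar]; ring
    linear_combination this
  have hsq : ∀ x y : F, x ^ 2 = y ^ 2 → x = y := by
    intro x y h
    have h0 : (x - y) ^ 2 = 0 := by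
      have : x ^ 2 + y ^ 2 = 0 := by rw [h]; exact htwo _
      linear_combination this - (x*y) * hchar
    have := pow_eq_zero_iff (n := 2) (by norm_num) |>.mp h0
    exact sub_eq_zero.mp this
  have hmaps : Set.MapsTo (fun p : F × F => (p.1 ^ 2 + p.1 * p.2, p.2 ^ 2 + p.1 * p.2))
      {p : F × F | p.1 ≠ 0 ∧ p.2 ≠ 0 ∧ p.1 ≠ p.2}
      {p : F × F | p.1 ≠ 0 ∧ p.2 ≠ 0 ∧ p.1 ≠ p.2} := by
    rintro ⟨a, b⟩ ⟨ha, hb, hab⟩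
    have hsum : a + b ≠ 0 := by
      intro h
      apply hab
      have := htwo b
      have : a = b := by linear_combination h - this
      exact this
    have h1 : a ^ 2 + a * b = a * (a + b) := by ring
    have h2 : b ^ 2 + a * b = b * (a + b) := by ring
    refine ⟨by simp [h1]; exact ⟨ha, hsum⟩, by simp [h2]; exact ⟨hb, hsum⟩, ?_⟩
    simp only [h1, h2]
    intro h
    exact hab (mul_right_cancel₀ hsum h)
  have hinj : Set.InjOn (fun p : F × F => (p.1 ^ 2 + p.1 * p.2, p.2 ^ 2 + p.1 * p.2))
      {p : F × F | p.1 ≠ 0 ∧ p.2 ≠ 0 ∧ p.1 ≠ p.2} := by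
    rintro ⟨a, b⟩ ⟨ha, hb, hab⟩ ⟨c, d⟩ ⟨hc, hd, hcd⟩ h
    simp only [Prod.mk.injEq] at h
    obtain ⟨h1, h2⟩ := h
    have hsumsq : (a + b) ^ 2 = (c + d) ^ 2 := by
      linear_combination h1 + h2
    have hsum : a + b = c + d := hsq _ _ hsumsq
    have habne : a + b ≠ 0 := by
      intro h
      exact hab (by linear_combination h - htwo b)
    have hac : a = c := by
      have : a * (a + b) = c * (a + b) := by linear_combination h1 - c * hsum
      exact mul_right_cancel₀ habne this
    have hbd : b = d := by
      have : b * (a + b) = d * (a + b) := by linear_combination h2 - d * hsum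
      exact mul_right_cancel₀ habne this
    simp [hac, hbd]
  exact (Set.Finite.injOn_iff_bijOn_of_mapsTo (Set.toFinite _) hmaps).mp hinj
end

section
/- Let q = 2^n with n ≥ 2, and let V be an F_2-subspace of F_q of codimension 2. Then there exist distinct α, α' ∈ F_q* such that V is exactly the image of the map T_{α,α'} : F_q → F_q, x ↦ x(x+α)(x+α')(x+α+α'). -/
/-!
Let `U = V^⊥` for the nondegenerate trace form `(u, x) ↦ Tr(u x)` of `𝔽_q / 𝔽₂`. It is
2-dimensional, `U = span {β, β'}`, so `Q(u) = u (u + β) (u + β') (u + β + β') = u⁴ + B u² + C u`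
is `𝔽₂`-linear with kernel `U` and `C ≠ 0`. Take `P(x) = x⁴ + b x² + c x` with `b² = B / C` and
`c⁴ = 1 / C`. Moving the Frobenius powers across the trace shows that the adjoint of `P` is
`u ↦ ρ² (Q(u) / C)`, `ρ` the inverse of the Frobenius; it kills `U`, so `P(𝔽_q) ⊆ U^⊥ = V`.
Since `P` has at most 4 roots, its image has dimension at least `n - 2`; hence `P(𝔽_q) = V` and
`ker P = span {α, α'}` is 2-dimensional. Comparing coefficients, a polynomial
`x⁴ + b x² + c x` vanishing at `α` and `α'` is `x (x + α) (x + α') (x + α + α')`.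
-/

open Module Submodule LinearMap

theorem Submodule.exists_eq_span_pair_of_finrank_eq_two {K M : Type*} [Field K] [AddCommGroup M]
    [Module K M] (W : Submodule K M) (hW : finrank K W = 2) :
    ∃ β β' : M, β ≠ 0 ∧ β' ≠ 0 ∧ β ≠ β' ∧ W = span K {β, β'} := by
  have : Module.Finite K W := Module.finite_of_finrank_pos (by omega)
  let b := finBasisOfFinrankEq K W hW
  refine ⟨b 0, b 1, by simpa using b.ne_zero 0, by simpa using b.ne_zero 1,
    fun h => b.injective.ne Fin.zero_ne_one (Subtype.ext h), ?_⟩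
  have hrange : Set.range (W.subtype ∘ b) = {(b 0 : M), (b 1 : M)} := by
    ext; simp [Fin.exists_fin_two, eq_comm]
  rw [← hrange, Set.range_comp, ← map_span, b.span_eq, map_subtype_top]

section QuarticMap

variable {R : Type*} [CommRing R] [CharP R 2] [Module (ZMod 2) R]

def quarticMap (b c : R) : R →ₗ[ZMod 2] R :=
  AddMonoidHom.toZModLinearMap 2
    { toFun := fun x => x ^ 4 + b * x ^ 2 + c * x
      map_zero' := by ring
      map_add' := fun x y => by
        rw [show (4 : ℕ) = 2 ^ 2 by rfl, add_pow_char_pow, add_pow_char]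
        ring }

@[simp]
theorem quarticMap_apply (b c x : R) : quarticMap b c x = x ^ 4 + b * x ^ 2 + c * x := rfl

theorem quarticMap_pair_apply (a a' x : R) :
    quarticMap (a ^ 2 + a * a' + a' ^ 2) (a * a' * (a + a')) x =
      x * (x + a) * (x + a') * (x + a + a') := by
  rw [quarticMap_apply]
  linear_combination (-(x ^ 2 * a * a' + x ^ 3 * a' + x ^ 3 * a)) * CharTwo.two_eq_zero (R := R)

end QuarticMap

section Field

variable {F : Type*} [Field F] [CharP F 2]

theorem eq_of_mem_ker_quarticMap [Module (ZMod 2) F] {b c α α' : F} (hα : α ≠ 0)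
    (hα' : α' ≠ 0) (hαα' : α ≠ α') (h : α ∈ ker (quarticMap b c))
    (h' : α' ∈ ker (quarticMap b c)) :
    b = α ^ 2 + α * α' + α' ^ 2 ∧ c = α * α' * (α + α') := by
  have hfactor : ∀ z, quarticMap b c z = z * (z ^ 3 + b * z + c) := fun z => by
    rw [quarticMap_apply]; ring
  rw [mem_ker, hfactor] at h h'
  have hroot := (mul_eq_zero.1 h).resolve_left hα
  have hroot' := (mul_eq_zero.1 h').resolve_left hα'
  have hb : b = α ^ 2 + α * α' + α' ^ 2 := by
    have hdiff : (α - α') * (α ^ 2 + α * α' + α' ^ 2 + b) = 0 := by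
      linear_combination hroot - hroot'
    linear_combination (mul_eq_zero.1 hdiff).resolve_left (sub_ne_zero.2 hαα') -
      (α ^ 2 + α * α' + α' ^ 2) * CharTwo.two_eq_zero (R := F)
  refine ⟨hb, ?_⟩
  linear_combination
    hroot - α * hb - (α ^ 3 + α ^ 2 * α' + α * α' ^ 2) * CharTwo.two_eq_zero (R := F)

theorem finrank_ker_quarticMap_le_two [Finite F] [Module (ZMod 2) F] (b c : F) :
    finrank (ZMod 2) (ker (quarticMap b c)) ≤ 2 := by
  classical
  open Polynomial in
  let p : F[X] := X ^ 4 + C b * X ^ 2 + C c * X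
  have hp : p.natDegree = 4 := by simp only [p]; compute_degree!
  have hsub : (ker (quarticMap b c) : Set F) ⊆ (p.roots.toFinset : Set F) := fun x hx => by
    have hp0 : p ≠ 0 := fun h0 => by simp [h0] at hp
    simpa [p, hp0] using hx
  have hcard : Nat.card (ker (quarticMap b c)) ≤ 2 ^ 2 := calc
    Nat.card (ker (quarticMap b c)) ≤ (p.roots.toFinset : Set F).ncard :=
      Set.ncard_le_ncard hsub (Finset.finite_toSet _)
    _ ≤ p.natDegree := by
      rw [Set.ncard_coe_finset]; exact p.roots.toFinset_card_le.trans p.card_roots'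
    _ = 2 ^ 2 := hp
  rw [Module.natCard_eq_pow_finrank (K := ZMod 2), Nat.card_zmod] at hcard
  exact (Nat.pow_le_pow_iff_right one_lt_two).1 hcard

variable [Finite F] [Algebra (ZMod 2) F]

local notation "tr" => Algebra.trace (ZMod 2) F
local notation "ρ" => RingEquiv.symm (frobeniusEquiv F 2)

theorem trace_sq (x : F) : tr (x ^ 2) = tr x := by
  have := Fintype.ofFinite F
  simpa using Algebra.trace_eq_of_algEquiv (FiniteField.frobeniusAlgEquiv (ZMod 2) F 2) x

theorem trace_mul_sq (a x : F) : tr (a * x ^ 2) = tr (ρ a * x) := by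
  rw [← trace_sq (ρ a * x), mul_pow, frobeniusEquiv_symm_pow_p]

theorem trace_mul_quarticMap (b c u x : F) :
    tr (u * quarticMap b c x) = tr (ρ (ρ (u + b ^ 2 * u ^ 2 + c ^ 4 * u ^ 4)) * x) := by
  have hsplit : u * quarticMap b c x = u * (x ^ 2) ^ 2 + (b * u) * x ^ 2 + c * u * x := by
    rw [quarticMap_apply]; ring
  have hroot : ρ (ρ (u + b ^ 2 * u ^ 2 + c ^ 4 * u ^ 4)) = ρ (ρ u) + ρ (b * u) + c * u := by
    rw [show b ^ 2 * u ^ 2 = (b * u) ^ 2 by ring, show c ^ 4 * u ^ 4 = ((c * u) ^ 2) ^ 2 by ring,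
      map_add, map_add, map_add, map_add, frobeniusEquiv_symm_pow, frobeniusEquiv_symm_pow,
      frobeniusEquiv_symm_pow]
  rw [hsplit, hroot, map_add, map_add, trace_mul_sq, trace_mul_sq, trace_mul_sq]
  simp only [add_mul, map_add]

theorem exists_range_quarticMap_le_orthogonal_span_pair {β β' : F} (hβ : β ≠ 0) (hβ' : β' ≠ 0)
    (hββ' : β ≠ β') : ∃ b c : F, range (quarticMap b c) ≤
      (Algebra.traceForm (ZMod 2) F).orthogonal (span (ZMod 2) {β, β'}) := by
  set B := β ^ 2 + β * β' + β' ^ 2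
  set C := β * β' * (β + β')
  have hC : C ≠ 0 := mul_ne_zero (mul_ne_zero hβ hβ') (fun h => hββ' (CharTwo.add_eq_zero.1 h))
  have hspan : span (ZMod 2) {β, β'} ≤ ker (quarticMap B C) := by
    rw [span_le, Set.insert_subset_iff, Set.singleton_subset_iff]
    simp only [SetLike.mem_coe, mem_ker, B, C, quarticMap_pair_apply, CharTwo.add_self_eq_zero,
      mul_zero, zero_mul, and_self]
  refine ⟨ρ (B * C⁻¹), ρ (ρ C⁻¹), ?_⟩
  rintro _ ⟨x, rfl⟩
  rw [BilinForm.mem_orthogonal_iff]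
  intro u hu
  have hdual : u + ρ (B * C⁻¹) ^ 2 * u ^ 2 + ρ (ρ C⁻¹) ^ 4 * u ^ 4 = C⁻¹ * quarticMap B C u := by
    rw [show ρ (ρ C⁻¹) ^ 4 = (ρ (ρ C⁻¹) ^ 2) ^ 2 by ring]
    simp only [frobeniusEquiv_symm_pow_p, quarticMap_apply]
    field_simp
    ring
  rw [Algebra.traceForm_apply, trace_mul_quarticMap, hdual, mem_ker.1 (hspan hu)]
  simp

theorem exists_range_quarticMap_eq {V : Submodule (ZMod 2) F}
    (hV : finrank (ZMod 2) V + 2 = finrank (ZMod 2) F) :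
    ∃ b c : F, range (quarticMap b c) = V := by
  set form := Algebra.traceForm (ZMod 2) F
  have hform : form.Nondegenerate := traceForm_nondegenerate _ _
  have hU : finrank (ZMod 2) (form.orthogonal V) = 2 := by
    rw [BilinForm.finrank_orthogonal hform]; omega
  obtain ⟨β, β', hβ, hβ', hββ', hUspan⟩ := exists_eq_span_pair_of_finrank_eq_two _ hU
  obtain ⟨b, c, hle⟩ := exists_range_quarticMap_le_orthogonal_span_pair hβ hβ' hββ'
  rw [← hUspan,
    BilinForm.orthogonal_orthogonal hform (Algebra.traceForm_isSymm (ZMod 2)).isRefl] at hle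
  refine ⟨b, c, eq_of_le_of_finrank_le hle ?_⟩
  have := finrank_range_add_finrank_ker (quarticMap b c)
  have := finrank_ker_quarticMap_le_two b c
  omega

end Field

/-- Every `𝔽₂`-subspace `V ⊆ 𝔽_q` of codimension 2 is the image of some map
`T_{α,α'}(x) = x(x+α)(x+α')(x+α+α')` with `α, α'` distinct and nonzero. -/
theorem stmt14 (n : ℕ) (hn : 2 ≤ n) (F : Type*) [Field F] [Fintype F] [Algebra (ZMod 2) F]
    (hF : Fintype.card F = 2 ^ n)
    (V : Submodule (ZMod 2) F) (hV : Module.finrank (ZMod 2) V = n - 2) :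
    ∃ α α' : F, α ≠ 0 ∧ α' ≠ 0 ∧ α ≠ α' ∧
      (V : Set F) = Set.range (fun x : F => x * (x + α) * (x + α') * (x + α + α')) := by
  have : CharP F 2 := charP_of_injective_algebraMap (algebraMap (ZMod 2) F).injective 2
  have hfinrank : finrank (ZMod 2) F = n := by
    rw [Module.card_eq_pow_finrank (K := ZMod 2), ZMod.card] at hF
    exact Nat.pow_right_injective le_rfl hF
  obtain ⟨b, c, hrange⟩ := exists_range_quarticMap_eq (V := V) (by omega)
  have hker : finrank (ZMod 2) (ker (quarticMap b c)) = 2 := by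
    have := finrank_range_add_finrank_ker (quarticMap b c)
    rw [hrange] at this
    omega
  obtain ⟨α, α', hα, hα', hαα', hspan⟩ := exists_eq_span_pair_of_finrank_eq_two _ hker
  obtain ⟨rfl, rfl⟩ := eq_of_mem_ker_quarticMap hα hα' hαα'
    (hspan ▸ subset_span (by simp)) (hspan ▸ subset_span (by simp))
  refine ⟨α, α', hα, hα', hαα', ?_⟩
  rw [← hrange, coe_range]
  exact congrArg Set.range (funext (quarticMap_pair_apply α α'))
end

section
/- Let q = 2^n, let α, α' ∈ F_q* be distinct, β ∈ F_q, and consider the inversion map f : F_q → F_q with f(x) = x^{q−2}. For x ∉ {0, 1, α, α+1} (with α' = 1), the equation x^{q−2} + (x+α)^{q−2} + (x+1)^{q−2} + (x+α+1)^{q−2} = β is equivalent to β·x(x+α)(x+1)(x+α+1) + α(α+1) = 0. -/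
/-- For the inversion map `f(x) = x^(q-2)` on `𝔽_q`, `α ∈ 𝔽_q \ {0,1}` and
`x ∉ {0, 1, α, α+1}`, the equation
`x^(q-2) + (x+α)^(q-2) + (x+1)^(q-2) + (x+α+1)^(q-2) = β` is equivalent to
`β·x(x+α)(x+1)(x+α+1) + α(α+1) = 0`. -/
theorem stmt15 (n : ℕ) (F : Type*) [Field F] [Fintype F] (hF : Fintype.card F = 2 ^ n)
    (α β : F) (hα0 : α ≠ 0) (hα1 : α ≠ 1) :
    ∀ x : F, x ≠ 0 → x ≠ 1 → x ≠ α → x ≠ α + 1 →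
      (x ^ (2 ^ n - 2) + (x + α) ^ (2 ^ n - 2) + (x + 1) ^ (2 ^ n - 2) +
          (x + α + 1) ^ (2 ^ n - 2) = β ↔
        β * (x * (x + α) * (x + 1) * (x + α + 1)) + α * (α + 1) = 0) := by
  intro x hx0 hx1 hxα hxα1
  have hn : 1 ≤ n := by
    by_contra h
    interval_cases n
    · simp at hF
      have := Fintype.one_lt_card (α := F)
      omega
  have h2 : (2 : F) = 0 := by
    have hc : ((Fintype.card F : ℕ) : F) = 0 := FiniteField.cast_card_eq_zero F
    rw [hF] at hc
    push_cast at hc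
    exact pow_eq_zero_iff (by omega) |>.mp hc
  have hle : 2 ≤ 2 ^ n := by
    calc 2 = 2 ^ 1 := by norm_num
    _ ≤ 2 ^ n := Nat.pow_le_pow_right (by norm_num) hn
  have hpow : ∀ a : F, a ≠ 0 → a ^ (2 ^ n - 2) = a⁻¹ := by
    intro a ha
    have h1 : a ^ (2 ^ n - 1) = 1 := by
      rw [← hF]; exact FiniteField.pow_card_sub_one_eq_one a ha
    have he : 2 ^ n - 2 = (2 ^ n - 1) - 1 := by omega
    rw [he, pow_sub₀ a ha (by omega), h1, pow_one, one_mul]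
  have hA : x + α ≠ 0 := fun h => hxα (by linear_combination h - α * h2)
  have hB : x + 1 ≠ 0 := fun h => hx1 (by linear_combination h - h2)
  have hC : x + α + 1 ≠ 0 := fun h => hxα1 (by linear_combination h - (α + 1) * h2)
  rw [hpow x hx0, hpow _ hA, hpow _ hB, hpow _ hC]
  have hP : x * (x + α) * (x + 1) * (x + α + 1) ≠ 0 := by
    exact mul_ne_zero (mul_ne_zero (mul_ne_zero hx0 hA) hB) hC
  have key : (x⁻¹ + (x + α)⁻¹ + (x + 1)⁻¹ + (x + α + 1)⁻¹) *
      (x * (x + α) * (x + 1) * (x + α + 1)) = α * (α + 1) := by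
    field_simp
    ring_nf
    linear_combination (x + 3*x*α + x*α^2 + 3*x^2 + 3*x^2*α + 2*x^3) * h2
  constructor
  · intro h
    rw [← h, ← key]
    linear_combination (x⁻¹ + (x + α)⁻¹ + (x + 1)⁻¹ + (x + α + 1)⁻¹) *
      (x * (x + α) * (x + 1) * (x + α + 1)) * h2
  · intro h
    have hb : β * (x * (x + α) * (x + 1) * (x + α + 1)) = α * (α + 1) := by
      linear_combination h - α * (α + 1) * h2
    have := mul_right_cancel₀ hP (key.trans hb.symm)
    exact this
end

section
/- Let q = 2^n, and let f(x) = x^{q−2} (the inversion map on F_q). For α ∈ F_q \ {0,1}, an element x ∈ {0, 1, α, α+1} satisfies x^{q−2} + (x+α)^{q−2} + (x+1)^{q−2} + (x+α+1)^{q−2} = β if and only if β = (α² + α + 1)/(α(α+1)). -/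
/-- For the inversion map `f(x) = x^(q-2)` on `𝔽_q` and `α ∈ 𝔽_q \ {0,1}`, an element
`x ∈ {0, 1, α, α+1}` satisfies
`x^(q-2) + (x+α)^(q-2) + (x+1)^(q-2) + (x+α+1)^(q-2) = β` iff
`β = (α² + α + 1)/(α(α+1))`. -/
theorem stmt16 (n : ℕ) (F : Type*) [Field F] [Fintype F] (hF : Fintype.card F = 2 ^ n)
    (α β : F) (hα0 : α ≠ 0) (hα1 : α ≠ 1) :
    ∀ x ∈ ({0, 1, α, α + 1} : Set F),
      (x ^ (2 ^ n - 2) + (x + α) ^ (2 ^ n - 2) + (x + 1) ^ (2 ^ n - 2) +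
          (x + α + 1) ^ (2 ^ n - 2) = β ↔
        β = (α ^ 2 + α + 1) / (α * (α + 1))) := by
  have hn : n ≠ 0 := by
    intro h
    have := Fintype.one_lt_card (α := F)
    rw [hF, h] at this
    simp at this
  have h2 : (2 : F) = 0 := by
    have hc : ((Fintype.card F : ℕ) : F) = 0 := Nat.cast_card_eq_zero F
    rw [hF] at hc
    push_cast at hc
    exact pow_eq_zero_iff hn |>.mp hc
  have hpos : 0 < 2 ^ n - 2 := by
    have hn2 : 2 ≤ n := by
      by_contra h
      interval_cases n
      · exact hn rfl
      · have hcard : Fintype.card F = 2 := by rw [hF]; norm_num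
        have hα2 : α ^ 2 = α := by
          have := FiniteField.pow_card α
          rwa [hcard] at this
        have : α * (α - 1) = 0 := by linear_combination hα2
        rcases mul_eq_zero.mp this with h | h
        · exact hα0 h
        · exact hα1 (sub_eq_zero.mp h)
    have : 4 ≤ 2 ^ n := by
      calc 4 = 2 ^ 2 := rfl
        _ ≤ 2 ^ n := Nat.pow_le_pow_right (by norm_num) hn2
    omega
  have hinv : ∀ x : F, x ^ (2 ^ n - 2) = x⁻¹ := by
    intro x
    rcases eq_or_ne x 0 with rfl | hx
    · simp [zero_pow hpos.ne']
    · have h1 : x ^ (2 ^ n - 1) = 1 := by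
        have := FiniteField.pow_card_sub_one_eq_one x hx
        rwa [hF] at this
      have hm : x ^ (2 ^ n - 2) * x = 1 := by
        rw [← pow_succ, show 2 ^ n - 2 + 1 = 2 ^ n - 1 by omega, h1]
      exact eq_inv_of_mul_eq_one_left (by linear_combination hm)
  have hα1' : α + 1 ≠ 0 := fun h => hα1 (by linear_combination h - h2)
  have e1 : α * α⁻¹ = 1 := mul_inv_cancel₀ hα0
  have e2 : (α + 1) * (α + 1)⁻¹ = 1 := mul_inv_cancel₀ hα1'
  have main : α⁻¹ + 1 + (α + 1)⁻¹ = (α ^ 2 + α + 1) / (α * (α + 1)) := by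
    rw [eq_div_iff (mul_ne_zero hα0 hα1')]
    linear_combination (α + 1) * e1 + α * e2 + α * h2
  intro x hx
  have key : x ^ (2 ^ n - 2) + (x + α) ^ (2 ^ n - 2) + (x + 1) ^ (2 ^ n - 2) +
      (x + α + 1) ^ (2 ^ n - 2) = (α ^ 2 + α + 1) / (α * (α + 1)) := by
    simp only [hinv]
    rcases hx with rfl | hxe | hxe | hxe
    · rw [show (0:F) + α + 1 = α + 1 by ring, show (0:F) + α = α by ring,
        show (0:F) + 1 = 1 by ring, inv_zero, inv_one]
      linear_combination main
    · rw [hxe, show (1:F) + α + 1 = α by linear_combination h2,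
        show (1:F) + 1 = 0 by linear_combination h2,
        show (1:F) + α = α + 1 by ring, inv_zero, inv_one]
      linear_combination main
    · rw [hxe, show α + α = 0 by linear_combination α * h2, inv_zero, zero_add, inv_one]
      linear_combination main
    · rw [hxe, show α + 1 + α + 1 = 0 by linear_combination (α + 1) * h2,
        show α + 1 + α = 1 by linear_combination α * h2,
        show α + 1 + 1 = α by linear_combination h2, inv_zero, inv_one]
      linear_combination main
  rw [key]
  exact eq_comm
end

section
/- Let q = 2^n with n even and n ≥ 6, and let f(x) = x^{q−2} be the inversion map on F_q. Then the second order differential uniformity δ²(f) := max over distinct α, α' ∈ F_q* and β ∈ F_q of #{x ∈ F_q : f(x)+f(x+α)+f(x+α')+f(x+α+α') = β} is at least 8. -/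
open Finset Polynomial

-- char 2 from card
lemma aux_two_eq_zero (F : Type*) [Field F] [Fintype F] {n : ℕ} (hn : 0 < n)
    (hF : Fintype.card F = 2 ^ n) : (2 : F) = 0 := by
  have h := FiniteField.cast_card_eq_zero F
  rw [hF] at h
  push_cast at h
  exact pow_eq_zero_iff hn.ne' |>.mp h

lemma aux_charP (F : Type*) [Field F] [Fintype F] {n : ℕ} (hn : 0 < n)
    (hF : Fintype.card F = 2 ^ n) : CharP F 2 := by
  have h2 : (2 : F) = 0 := aux_two_eq_zero F hn hF
  have := CharP.ringChar_of_prime_eq_zero Nat.prime_two h2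
  exact this ▸ ringChar.charP F

lemma aux_AS (F : Type*) [Field F] [Fintype F] {n m : ℕ} (hn : n = m + m) (hm : 0 < m)
    (hF : Fintype.card F = 2 ^ n) (u : F) (hu : u ^ 2 ^ m = u) :
    ∃ z : F, z * z + z = u := by
  classical
  have hn0 : 0 < n := by omega
  haveI : Fact (Nat.Prime 2) := ⟨Nat.prime_two⟩
  haveI : CharP F 2 := aux_charP F hn0 hF
  have htwo : (2 : F) = 0 := aux_two_eq_zero F hn0 hF
  set T : F → F := fun c => ∑ i ∈ Finset.range n, c ^ 2 ^ i with hT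
  set im : Finset F := Finset.image (fun z : F => z * z + z) Finset.univ with him
  set W : Finset F := Finset.univ.filter (fun c => T c = 0) with hW
  -- each value has at most 2 preimages
  have hcard1 : Fintype.card F ≤ 2 * im.card := by
    apply Finset.card_le_mul_card_image
    intro b hb
    obtain ⟨z, -, rfl⟩ := Finset.mem_image.mp hb
    have hsub : (Finset.univ.filter (fun a : F => a * a + a = z * z + z)) ⊆ {z, z + 1} := by
      intro a ha
      have ha' : a * a + a = z * z + z := (Finset.mem_filter.mp ha).2
      have : (a - z) * (a + z + 1) = 0 := by linear_combination ha'
      rcases mul_eq_zero.mp this with h | h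
      · simp [sub_eq_zero.mp h]
      · have : a = z + 1 := by linear_combination h - htwo - z*htwo
        simp [this]
    calc (Finset.univ.filter (fun a : F => a * a + a = z * z + z)).card
        ≤ ({z, z+1} : Finset F).card := Finset.card_le_card hsub
      _ ≤ 2 := Finset.card_insert_le _ _ |>.trans (by simp)
  -- image lands in trace kernel
  have hzq : ∀ z : F, z ^ 2 ^ n = z := by
    intro z
    have := FiniteField.pow_card z
    rwa [hF] at this
  have himW : im ⊆ W := by
    intro b hb
    obtain ⟨z, -, rfl⟩ := Finset.mem_image.mp hb
    rw [hW, Finset.mem_filter]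
    refine ⟨Finset.mem_univ _, ?_⟩
    have hsq : T (z * z) = T z := by
      simp only [hT]
      have h1 : ∀ i : ℕ, (z * z) ^ 2 ^ i = z ^ 2 ^ (i + 1) := by
        intro i
        rw [pow_succ, pow_mul']
        ring
      rw [Finset.sum_congr rfl (fun i _ => h1 i)]
      have e1 := Finset.sum_range_succ' (fun i => z ^ 2 ^ i) n
      have e2 := Finset.sum_range_succ (fun i => z ^ 2 ^ i) n
      have h2 : ∑ i ∈ Finset.range n, z ^ 2 ^ (i+1)
          = (∑ i ∈ Finset.range n, z ^ 2 ^ i) + z ^ 2 ^ n - z ^ 2 ^ 0 := by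
        linear_combination e2 - e1
      rw [h2, hzq z]
      simp
    have hadd : T (z * z + z) = T (z * z) + T z := by
      simp only [hT]
      rw [← Finset.sum_add_distrib]
      apply Finset.sum_congr rfl
      intro i _
      exact add_pow_char_pow (z*z) z 2 i
    rw [hadd, hsq]
    rw [show T z + T z = 2 * T z by ring, htwo, zero_mul]
  -- trace kernel is small
  have hWcard : W.card ≤ 2 ^ (n - 1) := by
    set P : Polynomial F := ∑ i ∈ Finset.range n, Polynomial.X ^ 2 ^ i with hP
    have hcoeff : P.coeff (2 ^ (n-1)) = 1 := by
      rw [hP, Polynomial.finset_sum_coeff]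
      have : ∀ i ∈ Finset.range n,
          (Polynomial.X ^ 2 ^ i : Polynomial F).coeff (2 ^ (n-1))
          = if n - 1 = i then 1 else 0 := by
        intro i _
        rw [Polynomial.coeff_X_pow]
        by_cases h : n - 1 = i
        · simp [h]
        · have h' : ¬ (2^(n-1) = 2^i) := fun hc => h (Nat.pow_right_injective le_rfl hc)
          simp [h, h']
      rw [Finset.sum_congr rfl this, Finset.sum_ite_eq]
      simp [Finset.mem_range]
      omega
    have hPne : P ≠ 0 := fun h => by simp [h] at hcoeff
    have hdeg : P.natDegree ≤ 2 ^ (n - 1) := by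
      rw [hP]
      apply Polynomial.natDegree_sum_le_of_forall_le
      intro i hi
      rw [Polynomial.natDegree_X_pow]
      exact Nat.pow_le_pow_right (by norm_num) (by simp [Finset.mem_range] at hi; omega)
    have hroots : W ⊆ P.roots.toFinset := by
      intro c hc
      have hc' : T c = 0 := (Finset.mem_filter.mp hc).2
      rw [Multiset.mem_toFinset, Polynomial.mem_roots hPne]
      rw [Polynomial.IsRoot, hP]
      rw [Polynomial.eval_finset_sum]
      simpa using hc'
    calc W.card ≤ P.roots.toFinset.card := Finset.card_le_card hroots
      _ ≤ Multiset.card P.roots := Multiset.toFinset_card_le _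
      _ ≤ P.natDegree := Polynomial.card_roots' P
      _ ≤ 2 ^ (n-1) := hdeg
  have hpow : 2 ^ n = 2 * 2 ^ (n - 1) := by
    rw [← pow_succ']
    congr 1
    omega
  have himcard : 2 ^ (n - 1) ≤ im.card := by
    rw [hF, hpow] at hcard1
    omega
  have heq : im = W := Finset.eq_of_subset_of_card_le himW (hWcard.trans himcard)
  -- u lies in trace kernel
  have hTu : T u = 0 := by
    rw [hT]
    simp only
    rw [hn, Finset.sum_range_add]
    have : ∀ i ∈ Finset.range m, u ^ 2 ^ (m + i) = u ^ 2 ^ i := by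
      intro i _
      rw [pow_add, pow_mul, hu]
    rw [Finset.sum_congr rfl this]
    rw [← two_mul, htwo, zero_mul]
  have : u ∈ im := by
    rw [heq, hW, Finset.mem_filter]
    exact ⟨Finset.mem_univ _, hTu⟩
  obtain ⟨z, -, hz⟩ := Finset.mem_image.mp this
  exact ⟨z, hz⟩



lemma aux_inv (F : Type*) [Field F] [Fintype F] {n : ℕ} (hn : 2 ≤ n)
    (hF : Fintype.card F = 2 ^ n) (y : F) : y ^ (2 ^ n - 2) = y⁻¹ := by
  have h2 : 2 ^ 2 ≤ 2 ^ n := Nat.pow_le_pow_right (by norm_num) hn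
  rcases eq_or_ne y 0 with rfl | hy
  · rw [zero_pow (by omega), inv_zero]
  · have h1 : y ^ (2 ^ n - 1) = 1 := by
      have := FiniteField.pow_card_sub_one_eq_one y hy
      rwa [hF] at this
    have : y * y ^ (2 ^ n - 2) = 1 := by
      rw [← pow_succ']
      rw [show 2 ^ n - 2 + 1 = 2 ^ n - 1 by omega]
      exact h1
    field_simp at this ⊢
    linear_combination this

lemma aux_key {F : Type*} [Field F] (htwo : (2:F) = 0) (α r y : F)
    (hα : α * α + α = r) (hα0 : α ≠ 0) (hα1 : α + 1 ≠ 0)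
    (hr0 : r ≠ 0) (hr1 : 1 + r ≠ 0)
    (hy0 : y ≠ 0) (hy1 : y + 1 ≠ 0) (hyα : y + α ≠ 0) (hyα1 : y + α + 1 ≠ 0)
    (hq : (1 + r) * ((y * y + y) * (y * y + y) + r * (y * y + y)) = r * r) :
    y⁻¹ + (y + α)⁻¹ + (y + (α + 1))⁻¹ + (y + α + (α + 1))⁻¹
      = α⁻¹ + (α + 1)⁻¹ + 1 := by
  have pair : ∀ a b : F, a ≠ 0 → b ≠ 0 → a⁻¹ + b⁻¹ = (a + b) * (a * b)⁻¹ := by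
    intro a b ha hb
    field_simp
    ring
  have hyα1' : y + (α + 1) ≠ 0 := by
    intro h; exact hyα1 (by linear_combination h)
  have hv0 : y * y + y ≠ 0 := by
    rw [show y * y + y = y * (y + 1) by ring]
    exact mul_ne_zero hy0 hy1
  have hB : (y + α) * (y + α + 1) = (y * y + y) + r := by
    linear_combination hα + (α * y) * htwo
  have hvr0 : (y * y + y) + r ≠ 0 := by
    rw [← hB]; exact mul_ne_zero hyα hyα1
  have h2 : y⁻¹ + (y + 1)⁻¹ = (y * y + y)⁻¹ := by
    rw [pair y (y + 1) hy0 hy1, show y + (y + 1) = 1 by linear_combination y * htwo,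
      one_mul, show y * (y + 1) = y * y + y by ring]
  have h3 : (y + α)⁻¹ + (y + (α + 1))⁻¹ = ((y * y + y) + r)⁻¹ := by
    rw [pair _ _ hyα hyα1', show (y + α) + (y + (α + 1)) = 1 by
      linear_combination (y + α) * htwo, one_mul,
      show (y + α) * (y + (α + 1)) = (y + α) * (y + α + 1) by ring, hB]
  have h4 : α⁻¹ + (α + 1)⁻¹ = r⁻¹ := by
    rw [pair α (α + 1) hα0 hα1, show α + (α + 1) = 1 by linear_combination α * htwo,
      one_mul, show α * (α + 1) = α * α + α by ring, hα]
  have h5 : y + α + (α + 1) = y + 1 := by linear_combination α * htwo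
  rw [h5]
  rw [show y⁻¹ + (y + α)⁻¹ + (y + (α + 1))⁻¹ + (y + 1)⁻¹
      = (y⁻¹ + (y + 1)⁻¹) + ((y + α)⁻¹ + (y + (α + 1))⁻¹) by ring, h2, h3, h4]
  -- now : (v)⁻¹ + (v + r)⁻¹ = r⁻¹ + 1 with hq
  rw [pair _ _ hv0 hvr0]
  have h6 : (y * y + y) + ((y * y + y) + r) = r := by
    linear_combination (y * y + y) * htwo
  rw [h6]
  set v := y * y + y with hv
  field_simp
  linear_combination -hq


/-- For even `n ≥ 6` and the inversion map `f(x) = x^(q-2)` on `𝔽_q` (`q = 2^n`), the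
second order differential uniformity is at least 8: there exist distinct nonzero
`α, α'` and `β` such that `f(x)+f(x+α)+f(x+α')+f(x+α+α') = β` has at least 8 solutions. -/
theorem stmt17 (n : ℕ) (hn6 : 6 ≤ n) (hneven : Even n)
    (F : Type*) [Field F] [Fintype F] (hF : Fintype.card F = 2 ^ n) :
    ∃ α α' β : F, α ≠ 0 ∧ α' ≠ 0 ∧ α ≠ α' ∧
      8 ≤ Nat.card {x : F | x ^ (2 ^ n - 2) + (x + α) ^ (2 ^ n - 2) +
        (x + α') ^ (2 ^ n - 2) + (x + α + α') ^ (2 ^ n - 2) = β} := by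
  classical
  obtain ⟨m, hm⟩ := hneven
  have hm3 : 3 ≤ m := by omega
  have hn2 : 2 ≤ n := by omega
  haveI : Fact (Nat.Prime 2) := ⟨Nat.prime_two⟩
  haveI : CharP F 2 := aux_charP F (by omega) hF
  have htwo : (2:F) = 0 := aux_two_eq_zero F (by omega) hF
  have hinv : ∀ y : F, y ^ (2 ^ n - 2) = y⁻¹ := aux_inv F hn2 hF
  have one0 : (1:F) ≠ 0 := one_ne_zero
  -- generator and the subfield element w
  obtain ⟨g, hg⟩ := IsCyclic.exists_generator (α := Fˣ)
  have hgord : orderOf g = 2 ^ n - 1 := by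
    rw [orderOf_eq_card_of_forall_mem_zpowers hg, Nat.card_eq_fintype_card,
      Fintype.card_units, hF]
  have hdD : 2 ^ m - 1 ∣ 2 ^ n - 1 := by
    have h := Nat.sub_dvd_pow_sub_pow (2 ^ m) 1 2
    rw [one_pow, ← pow_mul] at h
    rwa [show m * 2 = m + m by ring, ← hm] at h
  have hn4 : 2 ^ 2 ≤ 2 ^ n := Nat.pow_le_pow_right (by norm_num) hn2
  have hm8 : 2 ^ 3 ≤ 2 ^ m := Nat.pow_le_pow_right (by norm_num) hm3
  have hD0 : 2 ^ n - 1 ≠ 0 := by omega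
  set k := (2 ^ n - 1) / (2 ^ m - 1) with hk
  have hkdvd : k ∣ 2 ^ n - 1 := Nat.div_dvd_of_dvd hdD
  have hword : orderOf (g ^ k) = 2 ^ m - 1 := by
    rw [orderOf_pow, hgord, Nat.gcd_eq_right hkdvd]
    exact Nat.div_div_self hdD hD0
  set w : F := ((g ^ k : Fˣ) : F) with hw
  have hd7 : 7 ≤ 2 ^ m - 1 := by omega
  have hw0 : w ≠ 0 := Units.ne_zero _
  have hwm : w ^ 2 ^ m = w := by
    have h1 : (g ^ k) ^ (2 ^ m - 1) = 1 := by rw [← hword]; exact pow_orderOf_eq_one _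
    have h2 : (g ^ k) ^ 2 ^ m = g ^ k := by
      rw [show 2 ^ m = (2 ^ m - 1) + 1 by omega, pow_succ, h1, one_mul]
    rw [hw, ← Units.val_pow_eq_pow_val, h2]
  have hw1 : w ≠ 1 := by
    intro h
    have h1 : g ^ k = 1 := Units.val_eq_one.mp (by rw [← hw]; exact h)
    rw [h1, orderOf_one] at hword
    omega
  have hww1 : w * w + w ≠ 1 := by
    intro heq
    have hcube : w ^ 3 = 1 := by linear_combination (w - 1) * heq + (w - 1) * htwo
    have h3 : (g ^ k) ^ 3 = 1 := by
      apply Units.val_eq_one.mp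
      rw [Units.val_pow_eq_pow_val, ← hw]
      exact hcube
    have := Nat.le_of_dvd (by norm_num) (hword ▸ orderOf_dvd_of_pow_eq_one h3)
    omega
  have hwp1 : w + 1 ≠ 0 := by
    intro h; exact hw1 (by linear_combination h - htwo)
  have hww0 : w * w + w ≠ 0 := by
    rw [show w * w + w = w * (w + 1) by ring]
    exact mul_ne_zero hw0 hwp1
  -- the parameters
  set r : F := 1 + (w * w + w)⁻¹ with hrdef
  have hre : r * (w * w + w) = (w * w + w) + 1 := by
    rw [hrdef]; field_simp
  have hr0 : r ≠ 0 := by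
    intro h
    rw [h, zero_mul] at hre
    exact hww1 (by linear_combination - hre - htwo)
  have hr1 : 1 + r ≠ 0 := by
    have h1 : 1 + r = (w * w + w)⁻¹ := by rw [hrdef]; linear_combination htwo
    rw [h1]; exact inv_ne_zero hww0
  -- Frobenius stability and Artin-Schreier roots
  have hKe : (w * w + w) ^ 2 ^ m = w * w + w := by
    rw [add_pow_char_pow (w * w) w 2 m, mul_pow, hwm]
  have hKr : r ^ 2 ^ m = r := by
    rw [hrdef, add_pow_char_pow (1:F) (w * w + w)⁻¹ 2 m, one_pow, inv_pow, hKe]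
  have hKu : (r * w) ^ 2 ^ m = r * w := by rw [mul_pow, hKr, hwm]
  obtain ⟨α, hα⟩ := aux_AS F hm (by omega) hF r hKr
  obtain ⟨x₀, hx⟩ := aux_AS F hm (by omega) hF (r * w) hKu
  have hα0 : α ≠ 0 := by
    intro h; apply hr0; rw [← hα, h]; ring
  have hα1 : α + 1 ≠ 0 := by
    intro h; apply hr0; rw [← hα]; linear_combination α * h
  have hrw0 : r * w ≠ 0 := mul_ne_zero hr0 hw0
  have hx0 : x₀ ≠ 0 := by
    intro h; apply hrw0; rw [← hx, h]; ring
  have hx1 : x₀ + 1 ≠ 0 := by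
    intro h; apply hrw0; rw [← hx]; linear_combination x₀ * h
  have hxα : x₀ + α ≠ 0 := by
    intro h
    have hcl : r * w = r := by
      linear_combination - hx + hα + (x₀ - α + 1) * h - α * htwo
    exact hw1 (mul_left_cancel₀ hr0 (by rw [hcl, mul_one]))
  have hxα1 : x₀ + α + 1 ≠ 0 := by
    intro h
    have hcl : r * w = r := by
      linear_combination - hx + hα + (x₀ - α) * h
    exact hw1 (mul_left_cancel₀ hr0 (by rw [hcl, mul_one]))
  -- quartic certificates
  have hQu : (1 + r) * ((r * w) * (r * w) + r * (r * w)) = r * r := by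
    linear_combination (r * r) * hre + (r * r * (w * w + w)) * htwo
  have hQx : (1 + r) * ((x₀ * x₀ + x₀) * (x₀ * x₀ + x₀) + r * (x₀ * x₀ + x₀)) = r * r := by
    linear_combination hQu + ((1 + r) * (x₀ * x₀ + x₀ + r * w + r)) * hx
  have hQx1 : (1 + r) * (((x₀+1) * (x₀+1) + (x₀+1)) * ((x₀+1) * (x₀+1) + (x₀+1))
      + r * ((x₀+1) * (x₀+1) + (x₀+1))) = r * r := by
    linear_combination hQx + ((1 + r) * (x₀ + 1) * (2 * (x₀ * x₀ + x₀) + 2 * x₀ + 2 + r)) * htwo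
  have hQA : (1 + r) * (((x₀ * x₀ + x₀) + r) * ((x₀ * x₀ + x₀) + r)
      + r * ((x₀ * x₀ + x₀) + r)) = r * r := by
    linear_combination hQx + ((1 + r) * (r * (x₀ * x₀ + x₀) + r * r)) * htwo
  have hQxα : (1 + r) * (((x₀+α) * (x₀+α) + (x₀+α)) * ((x₀+α) * (x₀+α) + (x₀+α))
      + r * ((x₀+α) * (x₀+α) + (x₀+α))) = r * r := by
    linear_combination hQA
      + ((1 + r) * (2 * ((x₀ * x₀ + x₀) + r) + (2 * α * x₀ + (α * α + α - r)) + r) * α * x₀) * htwo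
      + ((1 + r) * (2 * ((x₀ * x₀ + x₀) + r) + (2 * α * x₀ + (α * α + α - r)) + r)) * hα
  have hQxα1 : (1 + r) * (((x₀+α+1) * (x₀+α+1) + (x₀+α+1)) * ((x₀+α+1) * (x₀+α+1) + (x₀+α+1))
      + r * ((x₀+α+1) * (x₀+α+1) + (x₀+α+1))) = r * r := by
    linear_combination hQxα
      + ((1 + r) * (x₀ + α + 1) * (2 * ((x₀+α) * (x₀+α) + (x₀+α)) + 2 * (x₀+α) + 2 + r)) * htwo
  -- extra nonvanishing facts for shifted points
  have hene : ∀ a b : F, a + b ≠ 0 → a ≠ b := fun a b h hab => h (by rw [hab]; linear_combination b * htwo)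
  set β : F := α⁻¹ + (α + 1)⁻¹ + 1 with hβ
  set S : Set F := {x : F | x ^ (2 ^ n - 2) + (x + α) ^ (2 ^ n - 2) +
      (x + (α + 1)) ^ (2 ^ n - 2) + (x + α + (α + 1)) ^ (2 ^ n - 2) = β} with hS
  -- memberships
  have mem_gen : ∀ y : F, y ≠ 0 → y + 1 ≠ 0 → y + α ≠ 0 → y + α + 1 ≠ 0 →
      (1 + r) * ((y * y + y) * (y * y + y) + r * (y * y + y)) = r * r → y ∈ S := by
    intro y h0 h1 h2 h3 hq
    rw [hS, Set.mem_setOf_eq, hinv, hinv, hinv, hinv]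
    exact aux_key htwo α r y hα hα0 hα1 hr0 hr1 h0 h1 h2 h3 hq
  have memx : x₀ ∈ S := mem_gen x₀ hx0 hx1 hxα hxα1 hQx
  have memx1 : x₀ + 1 ∈ S := by
    apply mem_gen _ hx1 _ _ _ hQx1
    · intro h; exact hx0 (by linear_combination h - htwo)
    · intro h; exact hxα1 (by linear_combination h)
    · intro h; exact hxα (by linear_combination h - htwo)
  have memxα : x₀ + α ∈ S := by
    apply mem_gen _ hxα hxα1 _ _ hQxα
    · intro h; exact hx0 (by linear_combination h - α * htwo)
    · intro h; exact hx1 (by linear_combination h - α * htwo)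
  have memxα1 : x₀ + α + 1 ∈ S := by
    apply mem_gen _ hxα1 _ _ _ hQxα1
    · intro h; exact hxα (by linear_combination h - htwo)
    · intro h; exact hx1 (by linear_combination h - α * htwo)
    · intro h; exact hx0 (by linear_combination h - α * htwo - htwo)
  have mem0 : (0:F) ∈ S := by
    rw [hS, Set.mem_setOf_eq, hinv, hinv, hinv, hinv]
    rw [show (0:F) + α + (α + 1) = 1 by linear_combination α * htwo,
      show (0:F) + α = α by ring, show (0:F) + (α + 1) = α + 1 by ring, inv_zero, inv_one]
    rw [hβ]; ring
  have mem1 : (1:F) ∈ S := by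
    rw [hS, Set.mem_setOf_eq, hinv, hinv, hinv, hinv]
    rw [show (1:F) + α + (α + 1) = 0 by linear_combination (α + 1) * htwo,
      show (1:F) + α = α + 1 by ring, show (1:F) + (α + 1) = α by linear_combination htwo,
      inv_zero, inv_one]
    rw [hβ]; ring
  have memα : α ∈ S := by
    rw [hS, Set.mem_setOf_eq, hinv, hinv, hinv, hinv]
    rw [show α + α + (α + 1) = α + 1 by linear_combination α * htwo,
      show α + α = (0:F) by linear_combination α * htwo,
      show α + (α + 1) = (1:F) by linear_combination α * htwo, inv_zero, inv_one]
    rw [hβ]; ring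
  have memα1 : α + 1 ∈ S := by
    rw [hS, Set.mem_setOf_eq, hinv, hinv, hinv, hinv]
    rw [show (α + 1) + α + (α + 1) = α by linear_combination (α + 1) * htwo,
      show (α + 1) + α = (1:F) by linear_combination α * htwo,
      show (α + 1) + (α + 1) = (0:F) by linear_combination (α + 1) * htwo, inv_zero, inv_one]
    rw [hβ]; ring
  -- counting
  have hne := hene
  have nm0 : ((0:F)) ∉ ({(1:F), α, α+1, x₀, x₀+1, x₀+α, x₀+α+1} : Finset F) := by
    simp only [Finset.mem_insert, Finset.mem_singleton]
    push_neg
    exact ⟨hne _ _ (fun h => one0 (by linear_combination h)), hne _ _ (fun h => hα0 (by linear_combination h)), hne _ _ (fun h => hα1 (by linear_combination h)), hne _ _ (fun h => hx0 (by linear_combination h)), hne _ _ (fun h => hx1 (by linear_combination h)), hne _ _ (fun h => hxα (by linear_combination h)), hne _ _ (fun h => hxα1 (by linear_combination h))⟩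
  have nm1 : ((1:F)) ∉ ({α, α+1, x₀, x₀+1, x₀+α, x₀+α+1} : Finset F) := by
    simp only [Finset.mem_insert, Finset.mem_singleton]
    push_neg
    exact ⟨hne _ _ (fun h => hα1 (by linear_combination h)), hne _ _ (fun h => hα0 (by linear_combination h - 1*htwo)), hne _ _ (fun h => hx1 (by linear_combination h)), hne _ _ (fun h => hx0 (by linear_combination h - 1*htwo)), hne _ _ (fun h => hxα1 (by linear_combination h)), hne _ _ (fun h => hxα (by linear_combination h - 1*htwo))⟩
  have nm2 : (α) ∉ ({α+1, x₀, x₀+1, x₀+α, x₀+α+1} : Finset F) := by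
    simp only [Finset.mem_insert, Finset.mem_singleton]
    push_neg
    exact ⟨hne _ _ (fun h => one0 (by linear_combination h - α*htwo)), hne _ _ (fun h => hxα (by linear_combination h)), hne _ _ (fun h => hxα1 (by linear_combination h)), hne _ _ (fun h => hx0 (by linear_combination h - α*htwo)), hne _ _ (fun h => hx1 (by linear_combination h - α*htwo))⟩
  have nm3 : (α+1) ∉ ({x₀, x₀+1, x₀+α, x₀+α+1} : Finset F) := by
    simp only [Finset.mem_insert, Finset.mem_singleton]
    push_neg
    exact ⟨hne _ _ (fun h => hxα1 (by linear_combination h)), hne _ _ (fun h => hxα (by linear_combination h - 1*htwo)), hne _ _ (fun h => hx1 (by linear_combination h - α*htwo)), hne _ _ (fun h => hx0 (by linear_combination h - 1*htwo - α*htwo))⟩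
  have nm4 : (x₀) ∉ ({x₀+1, x₀+α, x₀+α+1} : Finset F) := by
    simp only [Finset.mem_insert, Finset.mem_singleton]
    push_neg
    exact ⟨hne _ _ (fun h => one0 (by linear_combination h - x₀*htwo)), hne _ _ (fun h => hα0 (by linear_combination h - x₀*htwo)), hne _ _ (fun h => hα1 (by linear_combination h - x₀*htwo))⟩
  have nm5 : (x₀+1) ∉ ({x₀+α, x₀+α+1} : Finset F) := by
    simp only [Finset.mem_insert, Finset.mem_singleton]
    push_neg
    exact ⟨hne _ _ (fun h => hα1 (by linear_combination h - x₀*htwo)), hne _ _ (fun h => hα0 (by linear_combination h - 1*htwo - x₀*htwo))⟩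
  have nm6 : (x₀+α) ∉ ({x₀+α+1} : Finset F) := by
    simp only [Finset.mem_singleton]
    exact hne _ _ (fun h => one0 (by linear_combination h - α*htwo - x₀*htwo))
  set Tset : Finset F := {(0:F), (1:F), α, α+1, x₀, x₀+1, x₀+α, x₀+α+1} with hT
  have hTcard : Tset.card = 8 := by
    rw [hT]
    rw [Finset.card_insert_of_notMem nm0, Finset.card_insert_of_notMem nm1,
      Finset.card_insert_of_notMem nm2, Finset.card_insert_of_notMem nm3,
      Finset.card_insert_of_notMem nm4, Finset.card_insert_of_notMem nm5,
      Finset.card_insert_of_notMem nm6, Finset.card_singleton]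
  have hsub : (↑Tset : Set F) ⊆ S := by
    intro s hs
    simp only [Finset.coe_insert, Finset.coe_singleton, Set.mem_insert_iff,
      Set.mem_singleton_iff, hT] at hs
    rcases hs with rfl|rfl|rfl|rfl|rfl|rfl|rfl|rfl
    exacts [mem0, mem1, memα, memα1, memx, memx1, memxα, memxα1]
  refine ⟨α, α + 1, β, hα0, hα1, hne α (α+1) (fun h => one0 (by linear_combination h - α*htwo)), ?_⟩
  have hcount : 8 ≤ S.ncard := by
    calc (8:ℕ) = Tset.card := hTcard.symm
      _ = (↑Tset : Set F).ncard := (Set.ncard_coe_finset _).symm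
      _ ≤ S.ncard := Set.ncard_le_ncard hsub (Set.toFinite _)
  rw [Nat.card_coe_set_eq]
  exact hcount
end
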